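/- Let $Y(1), Y(0)$ be real random variables with finite second moments, let $p \in (0,1)$, $\bar Y = (1-p)Y(1) + pY(0)$, $\tau = Y(1) - Y(0)$, $\sigma_d^2 = \mathrm{Var}(Y(d))$. Then $(p - p^2)^{-1}\mathrm{Var}(\bar Y) = \sigma_1^2/p + \sigma_0^2/(1-p) - \mathrm{Var}(\tau) \le \sigma_1^2/p + \sigma_0^2/(1-p) - (\sigma_1 - \sigma_0)^2 \le \sigma_1^2/p + \sigma_0^2/(1-p)$. -/

import Mathlib

/-! The two outer relations are algebra once `Var(Ȳ)` and `Var(τ)` are expanded through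
`Cov(Y(1), Y(0))`; the middle one is Cauchy–Schwarz for the covariance, which follows from the
nonnegativity of the quadratic `t ↦ Var(t X + Y)`. -/

open MeasureTheory ProbabilityTheory

namespace ProbabilityTheory

variable {Ω : Type*} [MeasurableSpace Ω] {μ : Measure Ω} [IsFiniteMeasure μ] {X Y : Ω → ℝ}

lemma variance_const_mul_add_const_mul (hX : MemLp X 2 μ) (hY : MemLp Y 2 μ) (a b : ℝ) :
    Var[fun ω ↦ a * X ω + b * Y ω; μ]
      = a ^ 2 * Var[X; μ] + 2 * (a * b) * cov[X, Y; μ] + b ^ 2 * Var[Y; μ] := by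
  rw [variance_fun_add (hX.const_mul a) (hY.const_mul b), variance_const_mul, variance_const_mul,
    covariance_const_mul_left, covariance_const_mul_right]
  ring

lemma covariance_sq_le_variance_mul_variance (hX : MemLp X 2 μ) (hY : MemLp Y 2 μ) :
    cov[X, Y; μ] ^ 2 ≤ Var[X; μ] * Var[Y; μ] := by
  have hquad : ∀ t : ℝ, 0 ≤ Var[X; μ] * (t * t) + 2 * cov[X, Y; μ] * t + Var[Y; μ] := by
    intro t
    have h := variance_const_mul_add_const_mul hX hY t 1
    simp only [one_mul, one_pow, mul_one] at h
    nlinarith [variance_nonneg (fun ω ↦ t * X ω + Y ω) μ]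
  have := discrim_le_zero hquad
  rw [discrim] at this
  nlinarith

lemma covariance_le_sqrt_variance_mul_sqrt_variance (hX : MemLp X 2 μ) (hY : MemLp Y 2 μ) :
    cov[X, Y; μ] ≤ √Var[X; μ] * √Var[Y; μ] := by
  rw [← Real.sqrt_mul (variance_nonneg X μ)]
  exact (le_abs_self _).trans (Real.abs_le_sqrt (covariance_sq_le_variance_mul_variance hX hY))

lemma sq_sqrt_variance_sub_sqrt_variance_le_variance_sub (hX : MemLp X 2 μ) (hY : MemLp Y 2 μ) :
    (√Var[X; μ] - √Var[Y; μ]) ^ 2 ≤ Var[fun ω ↦ X ω - Y ω; μ] := by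
  rw [variance_fun_sub hX hY]
  nlinarith [covariance_le_sqrt_variance_mul_sqrt_variance hX hY,
    Real.sq_sqrt (variance_nonneg X μ), Real.sq_sqrt (variance_nonneg Y μ)]

end ProbabilityTheory

/-- Neyman-style variance decomposition and bounds: for `Ȳ = (1-p)Y(1) + pY(0)`,
`τ = Y(1) - Y(0)`, `σ_d² = Var(Y(d))`,
`(p - p²)⁻¹ Var(Ȳ) = σ₁²/p + σ₀²/(1-p) - Var(τ) ≤ σ₁²/p + σ₀²/(1-p) - (σ₁ - σ₀)²
 ≤ σ₁²/p + σ₀²/(1-p)`. -/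
theorem neyman_variance_bounds {Ω : Type*} [MeasurableSpace Ω]
    (P : Measure Ω) [IsProbabilityMeasure P]
    (Y1 Y0 : Ω → ℝ) (hY1 : MemLp Y1 2 P) (hY0 : MemLp Y0 2 P)
    (p : ℝ) (hp0 : 0 < p) (hp1 : p < 1) :
    (p - p ^ 2)⁻¹ * variance (fun ω => (1 - p) * Y1 ω + p * Y0 ω) P
        = variance Y1 P / p + variance Y0 P / (1 - p) - variance (fun ω => Y1 ω - Y0 ω) P ∧
    variance Y1 P / p + variance Y0 P / (1 - p) - variance (fun ω => Y1 ω - Y0 ω) P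
        ≤ variance Y1 P / p + variance Y0 P / (1 - p)
          - (Real.sqrt (variance Y1 P) - Real.sqrt (variance Y0 P)) ^ 2 ∧
    variance Y1 P / p + variance Y0 P / (1 - p)
          - (Real.sqrt (variance Y1 P) - Real.sqrt (variance Y0 P)) ^ 2
        ≤ variance Y1 P / p + variance Y0 P / (1 - p) := by
  refine ⟨?_, ?_, ?_⟩
  · have hp : p ≠ 0 := hp0.ne'
    have hq : 1 - p ≠ 0 := (sub_pos.2 hp1).ne'
    have hpq : p - p ^ 2 = p * (1 - p) := by ring
    rw [variance_const_mul_add_const_mul hY1 hY0, variance_fun_sub hY1 hY0, hpq]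
    field_simp
    ring
  · linarith [sq_sqrt_variance_sub_sqrt_variance_le_variance_sub hY1 hY0]
  · linarith [sq_nonneg (Real.sqrt (variance Y1 P) - Real.sqrt (variance Y0 P))]
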